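/- Let n > 1 be an odd integer and let f_{n,k}(x) = k·∑_{j≥0} C(n-1, 2j+1)(x^j − x^{j+1}) + 2·∑_{j≥0} C(n, 2j) x^j ∈ ℤ[x]. Then f_{n,k} is self-reciprocal if and only if k = 1, or (n = 3 and k = 3). -/

import Mathlib

/-!
Writing `f_{n,k} = k (1 - x) A + 2 B` with `A = ∑ C(n-1, 2j+1) x^j` and `B = ∑ C(n, 2j) x^j`, the
coefficient of `x^i` is `k (C(n-1, 2i+1) - C(n-1, 2i-1)) + 2 C(n, 2i)`. For `n = 2m + 1` the
polynomial has degree at most `m`, constant term `2mk + 2` and coefficient `2(2m+1) - 2mk` at `x^m`.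
If the latter is nonzero, self-reciprocity equates the two, forcing `k = 1`; if it vanishes then
`m (k - 2) = 1`, so `m = 1` and `k = 3`. Conversely, for `k = 1` Pascal's rule turns the coefficients
into `C(n+1, 2i+1)`, which are symmetric about `m`, and `f_{3,3} = 8`.
-/

open Polynomial Finset

/-- The polynomial `f_{n,k}` arising from reversed Dickson polynomials, over ℤ. -/
noncomputable def fnk (n : ℕ) (k : ℤ) : ℤ[X] :=
  Polynomial.C k * ∑ j ∈ range (n + 1),
      (Nat.choose (n - 1) (2 * j + 1) : ℤ[X]) * (X ^ j - X ^ (j + 1))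
    + 2 * ∑ j ∈ range (n + 1), (Nat.choose n (2 * j) : ℤ[X]) * X ^ j

theorem coeff_sum_range_natCast_mul_X_pow {R : Type*} [Semiring R] (a : ℕ → ℕ) {N : ℕ}
    (ha : ∀ j, N ≤ j → a j = 0) (i : ℕ) :
    (∑ j ∈ range N, (a j : R[X]) * X ^ j).coeff i = (a i : R) := by
  simp only [finsetSum_coeff, coeff_natCast_mul, coeff_X_pow, mul_ite, mul_one, mul_zero,
    sum_ite_eq, mem_range]
  split_ifs with hi
  · rfl
  · simp [ha i (not_lt.mp hi)]

theorem reverse_eq_self_of_coeff_symm {R : Type*} [Semiring R] {p : R[X]} {d : ℕ}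
    (hd : p.natDegree = d) (h : ∀ i ≤ d, p.coeff (d - i) = p.coeff i) : p.reverse = p := by
  ext i
  rw [coeff_reverse, hd]
  rcases le_or_gt i d with hi | hi
  · rw [revAt_le hi, h i hi]
  · rw [revAt_eq_self_of_lt hi]

theorem fnk_eq_one_sub_X_mul (n : ℕ) (k : ℤ) :
    fnk n k = C k * ((1 - X) * ∑ j ∈ range (n + 1), ((n - 1).choose (2 * j + 1) : ℤ[X]) * X ^ j)
      + 2 * ∑ j ∈ range (n + 1), (n.choose (2 * j) : ℤ[X]) * X ^ j := by
  rw [fnk]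
  congr 2
  rw [Finset.mul_sum]
  refine Finset.sum_congr rfl fun j _ => ?_
  ring

theorem coeff_fnk (n : ℕ) (k : ℤ) (i : ℕ) :
    (fnk n k).coeff i = k * ((1 - X) * ∑ j ∈ range (n + 1),
        ((n - 1).choose (2 * j + 1) : ℤ[X]) * X ^ j).coeff i + 2 * n.choose (2 * i) := by
  rw [fnk_eq_one_sub_X_mul, coeff_add, coeff_C_mul, coeff_ofNat_mul,
    coeff_sum_range_natCast_mul_X_pow _ fun j hj => Nat.choose_eq_zero_of_lt (by omega)]

theorem coeff_fnk_zero (n : ℕ) (k : ℤ) : (fnk (n + 1) k).coeff 0 = k * n + 2 := by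
  rw [coeff_fnk, sub_mul, one_mul, coeff_sub, coeff_X_mul_zero,
    coeff_sum_range_natCast_mul_X_pow _ fun j hj => Nat.choose_eq_zero_of_lt (by omega)]
  simp

theorem coeff_fnk_succ (n : ℕ) (k : ℤ) (i : ℕ) :
    (fnk n k).coeff (i + 1) = k * ((n - 1).choose (2 * i + 3) - (n - 1).choose (2 * i + 1))
      + 2 * n.choose (2 * i + 2) := by
  rw [coeff_fnk, sub_mul, one_mul, coeff_sub, coeff_X_mul,
    coeff_sum_range_natCast_mul_X_pow _ fun j hj => Nat.choose_eq_zero_of_lt (by omega),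
    coeff_sum_range_natCast_mul_X_pow _ fun j hj => Nat.choose_eq_zero_of_lt (by omega)]
  rfl

theorem coeff_fnk_one (n i : ℕ) : (fnk (n + 1) 1).coeff i = (n + 2).choose (2 * i + 1) := by
  rcases i with _ | i
  · rw [coeff_fnk_zero, Nat.choose_one_right]
    push_cast
    ring
  · rw [coeff_fnk_succ, Nat.add_sub_cancel, show 2 * (i + 1) + 1 = 2 * i + 3 by ring,
      Nat.choose_succ_succ' (n + 1), Nat.choose_succ_succ' n (2 * i + 2),
      Nat.choose_succ_succ' n (2 * i + 1)]
    push_cast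
    ring

theorem natDegree_fnk_le (m : ℕ) (k : ℤ) : (fnk (2 * m + 1) k).natDegree ≤ m := by
  refine natDegree_le_iff_coeff_eq_zero.mpr fun i hi => ?_
  obtain ⟨i, rfl⟩ : ∃ j, i = j + 1 := ⟨i - 1, by omega⟩
  rw [coeff_fnk_succ, Nat.choose_eq_zero_of_lt (by omega : 2 * m + 1 - 1 < 2 * i + 3),
    Nat.choose_eq_zero_of_lt (by omega : 2 * m + 1 - 1 < 2 * i + 1),
    Nat.choose_eq_zero_of_lt (by omega : 2 * m + 1 < 2 * i + 2)]
  simp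

theorem coeff_fnk_two_mul_add_one_self (m : ℕ) (k : ℤ) :
    (fnk (2 * m + 1) k).coeff m = 2 * (2 * m + 1) - 2 * m * k := by
  rcases m with _ | m
  · rw [coeff_fnk_zero]
    simp
  · rw [coeff_fnk_succ, Nat.choose_eq_zero_of_lt (by omega : 2 * (m + 1) + 1 - 1 < 2 * m + 3),
      show 2 * (m + 1) + 1 - 1 = 2 * m + 1 + 1 by omega, Nat.choose_succ_self_right,
      show 2 * m + 2 = 2 * (m + 1) by ring, Nat.choose_succ_self_right]
    push_cast
    ring

theorem reverse_fnk_one (m : ℕ) : (fnk (2 * m + 1) 1).reverse = fnk (2 * m + 1) 1 := by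
  have hdeg : (fnk (2 * m + 1) 1).natDegree = m := by
    refine le_antisymm (natDegree_fnk_le m 1) (le_natDegree_of_ne_zero ?_)
    rw [coeff_fnk_two_mul_add_one_self]
    omega
  refine reverse_eq_self_of_coeff_symm hdeg fun i hi => ?_
  rw [coeff_fnk_one, coeff_fnk_one, ← Nat.choose_symm (by omega : 2 * i + 1 ≤ 2 * m + 2)]
  congr 2
  omega

theorem fnk_three_three : fnk 3 3 = C 8 := by
  simp [fnk, Finset.sum_range_succ, Nat.choose_eq_zero_of_lt]
  ring

/-- A polynomial is self-reciprocal iff it equals its reverse. -/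
theorem fnk_selfReciprocal_odd (n : ℕ) (k : ℤ) (hn : 1 < n) (hodd : Odd n) :
    (fnk n k).reverse = fnk n k ↔ k = 1 ∨ (n = 3 ∧ k = 3) := by
  obtain ⟨m, rfl⟩ := hodd
  have hm : (0 : ℤ) < m := by omega
  have htop := coeff_fnk_two_mul_add_one_self m k
  constructor
  · intro h
    by_cases hvanish : (fnk (2 * m + 1) k).coeff m = 0
    · obtain rfl : m = 1 := by
        have hm1 := Int.eq_one_of_mul_eq_one_right hm.le (by linarith : (m : ℤ) * (k - 2) = 1)
        omega
      right
      norm_num at htop hvanish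
      exact ⟨rfl, by linarith⟩
    · have hdeg := le_antisymm (natDegree_fnk_le m k) (le_natDegree_of_ne_zero hvanish)
      have h0 := congrArg (coeff · 0) h
      simp only [coeff_zero_reverse, leadingCoeff, hdeg, htop, coeff_fnk_zero] at h0
      push_cast at h0
      have hk : (m : ℤ) * (k - 1) = 0 := by linarith
      left
      linarith [(mul_eq_zero.mp hk).resolve_left hm.ne']
  · rintro (rfl | ⟨hn3, rfl⟩)
    · exact reverse_fnk_one m
    · obtain rfl : m = 1 := by omega
      rw [show 2 * 1 + 1 = 3 from rfl, fnk_three_three, reverse_C]
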